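/- arXiv:1611.00057 — 3 statements merged into one kernel-verified Lean document; each statement's English description precedes it below -/
import Mathlib

section
/- There exists a complex number δ (the coefficient c_{1,0} of the paper) such that (c(u) + 1)/u tends to δ as u tends to 0 with u ≠ 0, and moreover (c(u) + 1 − δ·u)/u² tends to −δ²/2 as u tends to 0 with u ≠ 0. (This instantiates the relation c_{2,0} = −½·c_{1,0}² for the function c.) -/
open Filter Topology

/-- `Gfun u = u * Λ u` extended analytically across `u = 0`. -/
noncomputable def Gfun (u : ℂ) : ℂ := u * completedRiemannZeta₀ u - 1 - u / (1 - u)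

/-- `Pfun u = (Gfun (-u) - Gfun u) / u` extended analytically across `u = 0`. -/
noncomputable def Pfun (u : ℂ) : ℂ :=
  -completedRiemannZeta₀ (-u) - completedRiemannZeta₀ u + 1 / (1 + u) + 1 / (1 - u)

/-- The coefficient `c_{1,0}`. -/
noncomputable def delC : ℂ := 2 * completedRiemannZeta₀ 0 - 2

lemma Gfun_zero : Gfun 0 = -1 := by simp [Gfun]

lemma Pfun_zero : Pfun 0 = 2 - 2 * completedRiemannZeta₀ 0 := by
  simp [Pfun]; ring

lemma hasDerivAt_Gfun : HasDerivAt Gfun (completedRiemannZeta₀ 0 - 1) 0 := by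
  have h1 : HasDerivAt completedRiemannZeta₀ (deriv completedRiemannZeta₀ 0) 0 :=
    (differentiable_completedZeta₀ 0).hasDerivAt
  have h2 := (hasDerivAt_id (0 : ℂ)).mul h1
  have h3 : HasDerivAt (fun u : ℂ => u / (1 - u))
      ((1 * (1 - id (0:ℂ)) - id (0:ℂ) * (0 - 1)) / (1 - id (0:ℂ)) ^ 2) 0 :=
    (hasDerivAt_id (0 : ℂ)).div ((hasDerivAt_const (0:ℂ) 1).sub (hasDerivAt_id (0:ℂ)))
      (by norm_num)
  have h4 := (h2.sub_const 1).sub h3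
  refine h4.congr_deriv ?_
  simp

lemma hasDerivAt_Gneg :
    HasDerivAt (fun u : ℂ => Gfun (-u)) (1 - completedRiemannZeta₀ 0) 0 := by
  have h0 : HasDerivAt Gfun (completedRiemannZeta₀ 0 - 1) (-0 : ℂ) := by
    rw [neg_zero]; exact hasDerivAt_Gfun
  have := h0.comp 0 (hasDerivAt_neg (0 : ℂ))
  refine this.congr_deriv ?_
  ring

lemma hasDerivAt_Pfun : HasDerivAt Pfun 0 0 := by
  have h1 : HasDerivAt completedRiemannZeta₀ (deriv completedRiemannZeta₀ 0) 0 :=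
    (differentiable_completedZeta₀ 0).hasDerivAt
  have h1' : HasDerivAt completedRiemannZeta₀ (deriv completedRiemannZeta₀ 0) (-0 : ℂ) := by
    rw [neg_zero]; exact h1
  have h2 : HasDerivAt (fun u : ℂ => completedRiemannZeta₀ (-u))
      (deriv completedRiemannZeta₀ 0 * (-1)) 0 := h1'.comp 0 (hasDerivAt_neg (0 : ℂ))
  have h3 : HasDerivAt (fun u : ℂ => 1 / (1 + u))
      ((0 * (1 + id (0:ℂ)) - 1 * (0 + 1)) / (1 + id (0:ℂ)) ^ 2) 0 :=
    (hasDerivAt_const (0:ℂ) 1).div ((hasDerivAt_const (0:ℂ) 1).add (hasDerivAt_id (0:ℂ)))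
      (by norm_num)
  have h4 : HasDerivAt (fun u : ℂ => 1 / (1 - u))
      ((0 * (1 - id (0:ℂ)) - 1 * (0 - 1)) / (1 - id (0:ℂ)) ^ 2) 0 :=
    (hasDerivAt_const (0:ℂ) 1).div ((hasDerivAt_const (0:ℂ) 1).sub (hasDerivAt_id (0:ℂ)))
      (by norm_num)
  have h5 := ((h2.neg.sub h1).add h3).add h4
  refine h5.congr_deriv ?_
  simp

lemma key_eventually : ∀ᶠ u : ℂ in 𝓝[≠] (0 : ℂ),
    (completedRiemannZeta u / completedRiemannZeta (u + 1) + 1 = u * Pfun u / Gfun (-u))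
    ∧ Gfun (-u) ≠ 0 ∧ u ≠ 0 := by
  have hG : Tendsto (fun u : ℂ => Gfun (-u)) (𝓝 0) (𝓝 (-1)) := by
    have := hasDerivAt_Gneg.continuousAt.tendsto
    simpa [Gfun_zero] using this
  have hne : ∀ᶠ u : ℂ in 𝓝 0, Gfun (-u) ≠ 0 := hG.eventually_ne (by norm_num)
  have hball : ∀ᶠ u : ℂ in 𝓝 0, ‖u‖ < 1 := by
    have hn : Tendsto (fun u : ℂ => ‖u‖) (𝓝 0) (𝓝 0) := by
      simpa using (continuous_norm.tendsto (0 : ℂ))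
    exact hn.eventually (eventually_lt_nhds one_pos)
  filter_upwards [hne.filter_mono nhdsWithin_le_nhds, hball.filter_mono nhdsWithin_le_nhds,
    self_mem_nhdsWithin] with u hGne hu1 hu0
  have hu0' : u ≠ 0 := hu0
  have h1m : (1 : ℂ) - u ≠ 0 := by
    intro h; rw [sub_eq_zero] at h; rw [← h] at hu1; simp at hu1
  have h1p : (1 : ℂ) + u ≠ 0 := by
    intro h
    have : u = -1 := by linear_combination h
    rw [this] at hu1; simp at hu1
  have hnu : (-u : ℂ) ≠ 0 := neg_ne_zero.mpr hu0'
  have hΛ : completedRiemannZeta u = Gfun u / u := by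
    rw [completedRiemannZeta_eq, Gfun]
    field_simp
  have hΛ1 : completedRiemannZeta (u + 1) = Gfun (-u) / (-u) := by
    have he : u + 1 = 1 - (-u) := by ring
    rw [he, completedRiemannZeta_one_sub, completedRiemannZeta_eq, Gfun]
    have h1mn : (1 : ℂ) - -u ≠ 0 := by
      simpa [sub_neg_eq_add] using h1p
    field_simp
    ring
  have hGP : Gfun (-u) - Gfun u = u * Pfun u := by
    simp only [Gfun, Pfun, sub_neg_eq_add]
    field_simp
    ring
  refine ⟨?_, hGne, hu0'⟩
  rw [hΛ, hΛ1, ← hGP]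
  field_simp
  ring

/-- There is a complex number `δ` (the coefficient `c_{1,0}`) such that `(c(u)+1)/u → δ` as
`u → 0`, `u ≠ 0`, and `(c(u) + 1 - δ·u)/u² → -δ²/2` as `u → 0`, `u ≠ 0`, where
`c(s) = Λ(s)/Λ(s+1)` and `Λ` is the completed Riemann zeta function. -/
theorem completedRiemannZeta_ratio_taylor_at_zero :
    ∃ δ : ℂ,
      Tendsto (fun u : ℂ =>
          (completedRiemannZeta u / completedRiemannZeta (u + 1) + 1) / u)
        (𝓝[≠] (0 : ℂ)) (𝓝 δ) ∧
      Tendsto (fun u : ℂ =>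
          (completedRiemannZeta u / completedRiemannZeta (u + 1) + 1 - δ * u) / u ^ 2)
        (𝓝[≠] (0 : ℂ)) (𝓝 (-δ ^ 2 / 2)) := by
  have hG : Tendsto (fun u : ℂ => Gfun (-u)) (𝓝 0) (𝓝 (-1)) := by
    have := hasDerivAt_Gneg.continuousAt.tendsto
    simpa [Gfun_zero] using this
  refine ⟨delC, ?_, ?_⟩
  · have hP : Tendsto Pfun (𝓝 0) (𝓝 (Pfun 0)) := hasDerivAt_Pfun.continuousAt.tendsto
    have hd : Tendsto (fun u : ℂ => Pfun u / Gfun (-u)) (𝓝[≠] 0) (𝓝 (Pfun 0 / (-1))) :=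
      (hP.div hG (by norm_num)).mono_left nhdsWithin_le_nhds
    have hv : Pfun 0 / (-1 : ℂ) = delC := by rw [Pfun_zero, delC]; ring
    rw [hv] at hd
    refine hd.congr' ?_
    filter_upwards [key_eventually] with u hu
    obtain ⟨he, hGne, hu0⟩ := hu
    rw [he, mul_div_assoc, mul_div_cancel_left₀ _ hu0]
  · have hχ : HasDerivAt (fun u : ℂ => Pfun u - delC * Gfun (-u)) (delC ^ 2 / 2) 0 := by
      have := hasDerivAt_Pfun.sub (hasDerivAt_Gneg.const_mul delC)
      refine this.congr_deriv ?_
      rw [delC]; ring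
    have hslope : Tendsto (fun u : ℂ => (Pfun u - delC * Gfun (-u)) / u)
        (𝓝[≠] 0) (𝓝 (delC ^ 2 / 2)) := by
      have h0 : Pfun 0 - delC * Gfun 0 = 0 := by
        rw [Pfun_zero, Gfun_zero, delC]; ring
      have hs := hasDerivAt_iff_tendsto_slope.mp hχ
      refine hs.congr' ?_
      filter_upwards with u
      simp [slope_def_field, h0]
    have hGinv : Tendsto (fun u : ℂ => (Gfun (-u))⁻¹) (𝓝[≠] 0) (𝓝 (-1 : ℂ)) := by
      have h := hG.inv₀ (show (-1:ℂ) ≠ 0 by norm_num)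
      have h2 : Tendsto (fun u : ℂ => (Gfun (-u))⁻¹) (𝓝[≠] 0) (𝓝 ((-1:ℂ))⁻¹) :=
        h.mono_left nhdsWithin_le_nhds
      rw [show ((-1:ℂ))⁻¹ = -1 by norm_num] at h2
      exact h2
    have hmul := hslope.mul hGinv
    have hval : delC ^ 2 / 2 * (-1 : ℂ) = -delC ^ 2 / 2 := by ring
    rw [hval] at hmul
    refine hmul.congr' ?_
    filter_upwards [key_eventually] with u hu
    obtain ⟨he, hGne, hu0⟩ := hu
    rw [he]
    field_simp
end

section
/- There exists a complex number γ (the coefficient c_{0,1} of the paper) such that c(s) − (6/π)/(s−1) tends to γ as s tends to 1 with s ≠ 1, and moreover (c(s)/(s+1) + π/6)/(s+1) tends to −(π²/36)·γ as s tends to −1 with s ≠ −1. (This instantiates the relation c_{2,−1} = −c_{0,1}/c_{−1,1}² for the function c, given c_{−1,1} = 6/π and c_{1,−1} = −π/6.) -/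
open Filter Topology Complex

local notation "Λ" => completedRiemannZeta
local notation "Λ₀" => completedRiemannZeta₀

private noncomputable def auxN (s : ℂ) : ℂ := (s - 1) * Λ₀ s - (s - 1) / s + 1

private noncomputable def auxh (s : ℂ) : ℂ := auxN s / Λ (s + 1)

private lemma auxN_eq {s : ℂ} (hs0 : s ≠ 0) (hs1 : s ≠ 1) :
    auxN s = (s - 1) * Λ s := by
  rw [auxN, completedRiemannZeta_eq]
  have h1 : (1 : ℂ) - s ≠ 0 := by
    intro h; apply hs1; linear_combination -h
  field_simp
  ring

private lemma lambda_two : Λ 2 = (Real.pi : ℂ) / 6 := by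
  have h := riemannZeta_def_of_ne_zero (two_ne_zero (α := ℂ))
  have hG : Complex.Gammaℝ 2 = ((Real.pi : ℂ))⁻¹ := by
    rw [Complex.Gammaℝ_def, show (-(2 : ℂ) / 2) = -1 by norm_num,
      show ((2 : ℂ) / 2) = 1 by norm_num, cpow_neg_one, Complex.Gamma_one, mul_one]
  have hGne : Complex.Gammaℝ 2 ≠ 0 := Complex.Gammaℝ_ne_zero_of_re_pos (by norm_num)
  have hpi : (Real.pi : ℂ) ≠ 0 := ofReal_ne_zero.mpr Real.pi_ne_zero
  have hL : Λ 2 = riemannZeta 2 * Complex.Gammaℝ 2 := by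
    rw [h]; field_simp
  rw [hL, riemannZeta_two, hG]
  field_simp

private lemma lambda_two_ne : Λ 2 ≠ 0 := by
  rw [lambda_two]
  simp [Real.pi_ne_zero]

private lemma auxh_diff : DifferentiableAt ℂ auxh 1 := by
  apply DifferentiableAt.div
  · apply DifferentiableAt.add
    · exact ((differentiableAt_id.sub_const 1).mul
        differentiable_completedZeta₀.differentiableAt).sub
        ((differentiableAt_id.sub_const 1).div differentiableAt_id one_ne_zero)
    · exact differentiableAt_const 1
  · exact (differentiableAt_completedZeta (by norm_num) (by norm_num)).comp 1
      (differentiableAt_id.add_const 1)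
  · show Λ (1 + 1) ≠ 0
    norm_num [lambda_two_ne]

private lemma auxh_one : auxh 1 = 6 / (Real.pi : ℂ) := by
  have : (1 : ℂ) + 1 = 2 := by norm_num
  rw [auxh, auxN, this, lambda_two]
  have hpi : (Real.pi : ℂ) ≠ 0 := ofReal_ne_zero.mpr Real.pi_ne_zero
  field_simp
  ring

/-- There is a complex number `γ` (the coefficient `c_{0,1}`) such that
`c(s) - (6/π)/(s-1) → γ` as `s → 1`, `s ≠ 1`, and
`(c(s)/(s+1) + π/6)/(s+1) → -(π²/36)·γ` as `s → -1`, `s ≠ -1`, where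
`c(s) = Λ(s)/Λ(s+1)` and `Λ` is the completed Riemann zeta function. -/
theorem completedRiemannZeta_ratio_laurent_relation :
    ∃ γ : ℂ,
      Tendsto (fun s : ℂ =>
          completedRiemannZeta s / completedRiemannZeta (s + 1) - (6 / (Real.pi : ℂ)) / (s - 1))
        (𝓝[≠] (1 : ℂ)) (𝓝 γ) ∧
      Tendsto (fun s : ℂ =>
          (completedRiemannZeta s / completedRiemannZeta (s + 1) / (s + 1) +
            (Real.pi : ℂ) / 6) / (s + 1))
        (𝓝[≠] (-1 : ℂ)) (𝓝 (-((Real.pi : ℂ) ^ 2 / 36) * γ)) := by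
  have hpi : (Real.pi : ℂ) ≠ 0 := ofReal_ne_zero.mpr Real.pi_ne_zero
  set γ := deriv auxh 1 with hγ
  have H : HasDerivAt auxh γ 1 := auxh_diff.hasDerivAt
  refine ⟨γ, ?_, ?_⟩
  · -- first limit
    have hslope := hasDerivAt_iff_tendsto_slope.mp H
    refine hslope.congr' ?_
    have h0 : ∀ᶠ s in 𝓝[≠] (1 : ℂ), s ≠ 0 :=
      nhdsWithin_le_nhds (eventually_ne_nhds (by norm_num))
    filter_upwards [h0, self_mem_nhdsWithin] with s hs0 hs1
    have hs1' : s - 1 ≠ 0 := sub_ne_zero.mpr hs1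
    rw [slope_def_field, auxh_one]
    rw [sub_div]
    congr 1
    rw [auxh, auxN_eq hs0 hs1, div_div, mul_comm (Λ (s + 1)) (s - 1),
      mul_div_mul_left _ _ hs1']
  · -- second limit
    -- k s = π/6 - (auxh (-s))⁻¹
    have H1 : HasDerivAt auxh γ (-(-1) : ℂ) := by rw [neg_neg]; exact H
    have Hc : HasDerivAt (fun s : ℂ => auxh (-s)) (γ * -1) (-1) :=
      H1.comp (-1) (hasDerivAt_neg (-1 : ℂ))
    have hval : auxh (-(-1) : ℂ) = 6 / (Real.pi : ℂ) := by rw [neg_neg, auxh_one]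
    have hvne : auxh (-(-1) : ℂ) ≠ 0 := by
      rw [hval]; exact div_ne_zero (by norm_num) hpi
    have Hinv : HasDerivAt (fun s : ℂ => (auxh (-s))⁻¹)
        (-(γ * -1) / auxh (-(-1)) ^ 2) (-1) := Hc.inv hvne
    have Hk := (hasDerivAt_const (-1 : ℂ) ((Real.pi : ℂ) / 6)).sub Hinv
    rw [zero_sub] at Hk
    have hDval : (-(-(γ * -1) / auxh (-(-1)) ^ 2)) = -((Real.pi : ℂ) ^ 2 / 36) * γ := by
      rw [hval]
      field_simp
      ring
    rw [hDval] at Hk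
    have hslope := hasDerivAt_iff_tendsto_slope.mp Hk
    refine hslope.congr' ?_
    -- eventual facts
    have hΛne : ∀ᶠ s in 𝓝[≠] (-1 : ℂ), Λ s ≠ 0 := by
      have hc : ContinuousAt Λ (-1) :=
        (differentiableAt_completedZeta (by norm_num) (by norm_num)).continuousAt
      have hv : Λ (-1 : ℂ) ≠ 0 := by
        have := completedRiemannZeta_one_sub 2
        norm_num at this
        rw [this]; exact lambda_two_ne
      exact nhdsWithin_le_nhds (hc.eventually_ne hv)
    have hneg : Tendsto (fun s : ℂ => -s) (𝓝[≠] (-1 : ℂ)) (𝓝[≠] (1 : ℂ)) := by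
      rw [tendsto_nhdsWithin_iff]
      constructor
      · have : Tendsto (fun s : ℂ => -s) (𝓝 (-1)) (𝓝 1) := by
          simpa using (continuous_neg.tendsto (-1 : ℂ))
        exact this.mono_left nhdsWithin_le_nhds
      · filter_upwards [self_mem_nhdsWithin] with s hs
        have hs' : s ≠ -1 := hs
        simp only [Set.mem_compl_iff, Set.mem_singleton_iff]
        intro h
        exact hs' (by linear_combination -h)
    have hΛ1ne : ∀ᶠ s in 𝓝[≠] (-1 : ℂ), Λ (s + 1) ≠ 0 := by
      have := completedRiemannZeta_residue_one.comp hneg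
      have h2 : ∀ᶠ s in 𝓝[≠] (-1 : ℂ), (-s - 1) * Λ (-s) ≠ 0 := by
        refine this.eventually_ne one_ne_zero
      filter_upwards [h2] with s hs
      intro h
      apply hs
      have : Λ (-s) = Λ (s + 1) := by
        have := completedRiemannZeta_one_sub (s + 1)
        rw [show (1 : ℂ) - (s + 1) = -s by ring] at this
        exact this
      rw [this, h, mul_zero]
    have hs0 : ∀ᶠ s in 𝓝[≠] (-1 : ℂ), (-s : ℂ) ≠ 0 := by
      filter_upwards [nhdsWithin_le_nhds (eventually_ne_nhds
        (show (-1 : ℂ) ≠ 0 by norm_num))] with s hs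
      simpa using hs
    filter_upwards [hΛne, hΛ1ne, hs0, self_mem_nhdsWithin] with s hΛ hΛ1 hms hsne
    have hsne' : s ≠ -1 := hsne
    have hs1 : s + 1 ≠ 0 := by
      intro h; exact hsne' (by linear_combination h)
    have hmsne1 : (-s : ℂ) ≠ 1 := by
      intro h; exact hsne' (by linear_combination -h)
    -- compute auxh (-s)
    have hhs : auxh (-s) = (-(s + 1)) * Λ (s + 1) / Λ s := by
      rw [auxh, auxN_eq hms hmsne1]
      have e1 : Λ (-s) = Λ (s + 1) := by
        have := completedRiemannZeta_one_sub (s + 1)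
        rw [show (1 : ℂ) - (s + 1) = -s by ring] at this
        exact this
      have e2 : Λ (-s + 1) = Λ s := by
        have := completedRiemannZeta_one_sub s
        rw [show (1 : ℂ) - s = -s + 1 by ring] at this
        exact this
      rw [e1, e2]
      ring_nf
    rw [slope_def_field]
    simp only [Pi.sub_apply]
    have hk1 : (Real.pi : ℂ) / 6 - (auxh (-(-1 : ℂ)))⁻¹ = 0 := by
      rw [hval]
      field_simp
      ring
    rw [hk1, sub_zero, show s - (-1 : ℂ) = s + 1 by ring]
    congr 1
    rw [hhs, inv_div, neg_mul, div_neg, sub_neg_eq_add, div_div,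
      mul_comm (Λ (s + 1)) (s + 1), add_comm]
end

section
/- There exist complex numbers γ and δ such that: c(s) − (6/π)/(s−1) tends to γ as s → 1 (s ≠ 1); (c(u) + 1)/u tends to δ as u → 0 (u ≠ 0); and the function (1/3)·c(u)·c(3u−1)·c(u+1)·c(2u+1) − (3/π)/u tends to 3γ − (3/π)δ as u → 0 (u ≠ 0). (This is the scalar Laurent-expansion computation carried out in the proof of the paper's identity of unramified Eisenstein series: with κ = c_{−1,1} = 6/π, the product (1/3)c(u)c(3u−1)c(u+1)c(2u+1) equals κ/(2u) + (3c_{0,1} − κc_{1,0}/2) + O(u).) -/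
/-!
Near `s = 1` write `c(s) = R(s)/(s - 1)`, and near `u = 0` write `c(u) = C(u)`, with `R` and `C`
holomorphic: both come from the simple poles of `Λ` at `0` and `1` and from `Λ(1 - s) = Λ(s)`.
The functional equation also gives `c(-s) = c(s)⁻¹`, so `c(3u - 1) = -3u / R(1 - 3u)` and
`(1/3) c(u) c(3u-1) c(u+1) c(2u+1) = Q(u)/u` with `Q(u) = -C(u) R(1+u) R(1+2u) / (2 R(1-3u))`
holomorphic at `0`. Each of the three limits is then a difference quotient of a holomorphic
function: `γ = R'(1)`, `δ = C'(0)`, and the product rule computes `Q'(0) = 3γ - (3/π)δ`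
from `R(1) = 6/π` (that is, `Λ(2) = π/6`) and `C(0) = -1`.
-/

open Filter Topology

/-- `c(s) = Λ(s)/Λ(s+1)`, the ratio of completed Riemann zeta values from the paper. -/
noncomputable def paperC (s : ℂ) : ℂ := completedRiemannZeta s / completedRiemannZeta (s + 1)

open Complex Real

section DifferenceQuotient

variable {𝕜 : Type*} [NontriviallyNormedField 𝕜] {f : 𝕜 → 𝕜} {f' : 𝕜}

lemma tendsto_sub_div_sub_of_hasDerivAt {z : 𝕜} (hf : HasDerivAt f f' z) :
    Tendsto (fun s => (f s - f z) / (s - z)) (𝓝[≠] z) (𝓝 f') :=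
  (hasDerivAt_iff_tendsto_slope.mp hf).congr (slope_def_field f z)

lemma HasDerivAt.comp_const_add_mul {x : 𝕜} (hf : HasDerivAt f f' x) (a : 𝕜) :
    HasDerivAt (fun u => f (x + a * u)) (f' * a) 0 := by
  have hlin : HasDerivAt (fun u : 𝕜 => x + a * u) a 0 := by
    simpa using ((hasDerivAt_id (0 : 𝕜)).const_mul a).const_add x
  exact (by simpa using hf : HasDerivAt f f' (x + a * 0)).comp 0 hlin

end DifferenceQuotient

lemma completedRiemannZeta_two : completedRiemannZeta 2 = π / 6 := by
  have hGamma : Gammaℝ 2 = (π : ℂ)⁻¹ := by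
    rw [Gammaℝ_def, show -(2 : ℂ) / 2 = -1 by norm_num, div_self two_ne_zero, Complex.Gamma_one,
      cpow_neg_one, mul_one]
  have h := riemannZeta_def_of_ne_zero (two_ne_zero (α := ℂ))
  rw [riemannZeta_two, hGamma, div_inv_eq_mul] at h
  field_simp at h ⊢
  exact h.symm

/-- Since `Λ(s) = Λ₀(s) - 1/s - 1/(1 - s)`, this is `(s - 1) Λ(s)` continued across `s = 1`. -/
noncomputable def completedZetaMulSubOne (s : ℂ) : ℂ :=
  (s - 1) * (completedRiemannZeta₀ s - 1 / s) + 1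

lemma completedZetaMulSubOne_eq {s : ℂ} (hs : s ≠ 1) :
    completedZetaMulSubOne s = (s - 1) * completedRiemannZeta s := by
  have : 1 - s ≠ 0 := sub_ne_zero.mpr hs.symm
  rw [completedZetaMulSubOne, completedRiemannZeta_eq]
  field_simp
  ring

lemma completedZetaMulSubOne_one : completedZetaMulSubOne 1 = 1 := by
  simp [completedZetaMulSubOne]

lemma differentiableAt_completedZetaMulSubOne {s : ℂ} (hs : s ≠ 0) :
    DifferentiableAt ℂ completedZetaMulSubOne s :=
  ((differentiableAt_id.sub_const 1).mul ((differentiable_completedZeta₀ s).sub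
    ((differentiableAt_const 1).div differentiableAt_id hs))).add_const 1

noncomputable def paperCMulSubOne (s : ℂ) : ℂ :=
  completedZetaMulSubOne s / completedRiemannZeta (s + 1)

lemma paperC_eq_paperCMulSubOne_div {s : ℂ} (hs : s ≠ 1) :
    paperC s = paperCMulSubOne s / (s - 1) := by
  have : s - 1 ≠ 0 := sub_ne_zero.mpr hs
  rw [paperCMulSubOne, completedZetaMulSubOne_eq hs, paperC]
  field_simp

lemma paperCMulSubOne_one : paperCMulSubOne 1 = 6 / π := by
  rw [paperCMulSubOne, completedZetaMulSubOne_one, one_add_one_eq_two, completedRiemannZeta_two,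
    one_div_div]

lemma differentiableAt_paperCMulSubOne : DifferentiableAt ℂ paperCMulSubOne 1 := by
  have hΛ : DifferentiableAt ℂ (fun s : ℂ => completedRiemannZeta (s + 1)) 1 :=
    differentiableAt_comp_add_const.mpr (differentiableAt_completedZeta (by norm_num) (by norm_num))
  refine (differentiableAt_completedZetaMulSubOne one_ne_zero).div hΛ ?_
  simp [one_add_one_eq_two, completedRiemannZeta_two, Real.pi_ne_zero]

/-- Since `Λ(u) = Λ(1 - u)`, this is `c(u)` for `u ≠ 0`, continued across `u = 0`. -/
noncomputable def paperCReg (u : ℂ) : ℂ :=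
  -completedZetaMulSubOne (1 - u) / completedZetaMulSubOne (1 + u)

lemma paperC_eq_paperCReg {u : ℂ} (hu : u ≠ 0) : paperC u = paperCReg u := by
  have h₁ : 1 - u ≠ 1 := by simpa using hu
  have h₂ : 1 + u ≠ 1 := by simpa using hu
  rw [paperCReg, completedZetaMulSubOne_eq h₁, completedZetaMulSubOne_eq h₂,
    completedRiemannZeta_one_sub, paperC, add_comm u]
  field_simp
  ring

lemma paperCReg_zero : paperCReg 0 = -1 := by
  simp [paperCReg, completedZetaMulSubOne_one]

lemma differentiableAt_paperCReg : DifferentiableAt ℂ paperCReg 0 := by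
  have hE (a : ℂ) : DifferentiableAt ℂ (fun u => completedZetaMulSubOne (1 + a * u)) 0 :=
    ((differentiableAt_completedZetaMulSubOne one_ne_zero).hasDerivAt.comp_const_add_mul
      a).differentiableAt
  refine ((hE (-1)).neg.div (hE 1) ?_).congr_of_eventuallyEq (Eventually.of_forall fun u => ?_)
  · simp [completedZetaMulSubOne_one]
  · simp [paperCReg, sub_eq_add_neg]

lemma paperC_neg (s : ℂ) : paperC (-s) = (paperC s)⁻¹ := by
  rw [paperC, paperC, inv_div, ← completedRiemannZeta_one_sub (-s),
    ← completedRiemannZeta_one_sub s]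
  ring_nf

noncomputable def paperCProductReg (u : ℂ) : ℂ :=
  -paperCReg u * paperCMulSubOne (1 + u) * paperCMulSubOne (1 + 2 * u) /
    (2 * paperCMulSubOne (1 - 3 * u))

lemma paperC_product_eq {u : ℂ} (hu : u ≠ 0) :
    (1 / 3 : ℂ) * paperC u * paperC (3 * u - 1) * paperC (u + 1) * paperC (2 * u + 1) =
      paperCProductReg u / u := by
  have h₁ : u + 1 ≠ 1 := by simpa using hu
  have h₂ : 2 * u + 1 ≠ 1 := by simpa using hu
  have h₃ : 1 - 3 * u ≠ 1 := by simpa using hu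
  rw [show 3 * u - 1 = -(1 - 3 * u) by ring, paperC_neg, paperC_eq_paperCReg hu,
    paperC_eq_paperCMulSubOne_div h₁, paperC_eq_paperCMulSubOne_div h₂,
    paperC_eq_paperCMulSubOne_div h₃, paperCProductReg, add_comm u, add_comm (2 * u),
    add_sub_cancel_left, add_sub_cancel_left, sub_sub_cancel_left, inv_div]
  field_simp

lemma paperCProductReg_zero : paperCProductReg 0 = 3 / π := by
  simp only [paperCProductReg, paperCReg_zero, mul_zero, add_zero, sub_zero, paperCMulSubOne_one]
  field_simp
  ring

lemma hasDerivAt_paperCProductReg :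
    HasDerivAt paperCProductReg
      (3 * deriv paperCMulSubOne 1 - 3 / π * deriv paperCReg 0) 0 := by
  have hR := differentiableAt_paperCMulSubOne.hasDerivAt
  have hC := differentiableAt_paperCReg.hasDerivAt
  have h := ((hC.neg.mul (hR.comp_const_add_mul 1)).mul (hR.comp_const_add_mul 2)).div
    ((hR.comp_const_add_mul (-3)).const_mul 2) (by simp [paperCMulSubOne_one, Real.pi_ne_zero])
  refine (h.congr_deriv ?_).congr_of_eventuallyEq (Eventually.of_forall fun u => ?_)
  · simp only [Pi.mul_apply, Pi.neg_apply, mul_zero, add_zero, paperCReg_zero,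
      paperCMulSubOne_one]
    field_simp
    ring
  · simp [paperCProductReg, sub_eq_add_neg]

/-- There are complex numbers `γ = c_{0,1}` and `δ = c_{1,0}` with
`c(s) - (6/π)/(s-1) → γ` as `s → 1` and `(c(u)+1)/u → δ` as `u → 0`, such that
`(1/3)·c(u)·c(3u-1)·c(u+1)·c(2u+1) - (3/π)/u → 3γ - (3/π)δ` as `u → 0`; that is,
the product equals `(6/π)/(2u) + (3c_{0,1} - (6/π)c_{1,0}/2) + O(u)`. -/
theorem paperC_product_laurent_expansion :
    ∃ γ δ : ℂ,
      Tendsto (fun s : ℂ => paperC s - (6 / (Real.pi : ℂ)) / (s - 1)) (𝓝[≠] (1 : ℂ)) (𝓝 γ) ∧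
      Tendsto (fun u : ℂ => (paperC u + 1) / u) (𝓝[≠] (0 : ℂ)) (𝓝 δ) ∧
      Tendsto (fun u : ℂ =>
          (1 / 3 : ℂ) * paperC u * paperC (3 * u - 1) * paperC (u + 1) * paperC (2 * u + 1) -
            (3 / (Real.pi : ℂ)) / u)
        (𝓝[≠] (0 : ℂ)) (𝓝 (3 * γ - (3 / (Real.pi : ℂ)) * δ)) := by
  refine ⟨deriv paperCMulSubOne 1, deriv paperCReg 0, ?_, ?_, ?_⟩
  · refine (tendsto_sub_div_sub_of_hasDerivAt differentiableAt_paperCMulSubOne.hasDerivAt).congr'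
      (eventually_nhdsWithin_of_forall fun s hs => ?_)
    dsimp only
    rw [paperC_eq_paperCMulSubOne_div hs, paperCMulSubOne_one, sub_div]
  · refine (tendsto_sub_div_sub_of_hasDerivAt differentiableAt_paperCReg.hasDerivAt).congr'
      (eventually_nhdsWithin_of_forall fun u hu => ?_)
    dsimp only
    rw [paperC_eq_paperCReg hu, paperCReg_zero, sub_zero, sub_neg_eq_add]
  · refine (tendsto_sub_div_sub_of_hasDerivAt hasDerivAt_paperCProductReg).congr'
      (eventually_nhdsWithin_of_forall fun u hu => ?_)
    dsimp only
    rw [paperC_product_eq hu, paperCProductReg_zero, sub_zero, sub_div]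
end
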